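/- arXiv:1506.08382 — 2 statements merged into one kernel-verified Lean document; each statement's English description precedes it below -/
import Mathlib

section
/- For any two positive integers m and n, ∑_{k_1+k_2+⋯+k_m=n} (n choose k_1,k_2,…,k_m) ∏_{i=1}^m (k_i m + 1)^{k_i - 1} = (n+1)^{n-1} m^n, where the sum ranges over all m-tuples (k_1,…,k_m) of nonnegative integers summing to n, (n choose k_1,…,k_m) = n!/(k_1!⋯k_m!) is the multinomial coefficient, and each factor (k_i m + 1)^{k_i - 1} with k_i = 0 is interpreted as 1. -/
/-!
For a step `z`, the Abel polynomials `A_n(x) = x (x + n z)^(n-1)` (with `A_0 = 1`) are of binomial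
type, `A_n(x + y) = ∑ C(n,j) A_j(x) A_{n-j}(y)`, hence `∑ multinomial(k) ∏ A_{k_i}(x_i) = A_n(∑ x_i)`
over the tuples `k` summing to `n`. Taking `z = m` and all `x_i = 1` gives the identity, since
`A_k(1) = (k m + 1)^(k-1)` and `A_n(m) = (n+1)^(n-1) m^n`.

The binomial-type property comes from Abel's identity
`∑ C(n,j) A_j(x) (y + (n-j) z)^(n-j) = (x + y + n z)^n`: as polynomials in `y`, the derivative of
each side is `n` times the case `n - 1` at `y + z`, and both sides vanish at `y = -(x + n z)`, the
left one because an `n`-th finite difference kills polynomials of degree `< n`. Since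
`A_k(y) = B_k(y) - z B_k'(y)` for `B_k(y) = (y + k z)^k`, applying `1 - z d/dy` to Abel's identity
gives the binomial-type property.
-/

open Finset Polynomial

theorem binomialType_apply_sum_eq_sum_piAntidiag {ι R : Type*} [CommSemiring R] [DecidableEq ι]
    (p : ℕ → R → R) (hp_zero : ∀ n, p n 0 = if n = 0 then 1 else 0)
    (hp_add : ∀ n x y, p n (x + y) = ∑ q ∈ antidiagonal n, n.choose q.1 * p q.1 x * p q.2 y)
    (s : Finset ι) (x : ι → R) (n : ℕ) :
    p n (∑ i ∈ s, x i) = ∑ k ∈ piAntidiag s n, Nat.multinomial s k * ∏ i ∈ s, p (k i) (x i) := by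
  induction s using Finset.cons_induction generalizing n with
  | empty => cases n <;> simp [hp_zero]
  | cons a s ha ih =>
    rw [sum_cons, hp_add, piAntidiag_cons, sum_disjiUnion]
    refine sum_congr rfl fun q hq => ?_
    rw [ih, mul_sum, sum_map]
    refine sum_congr rfl fun k hk => ?_
    rw [HasAntidiagonal.mem_antidiagonal] at hq
    rw [mem_piAntidiag] at hk
    have hka : k a = 0 := not_imp_comm.1 (hk.2 a) ha
    have hoff : ∀ i ∈ s, k i + (if i = a then q.1 else 0) = k i := fun i hi => by
      rw [if_neg (ne_of_mem_of_not_mem hi ha), add_zero]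
    have hmult : Nat.multinomial s (k + fun i => if i = a then q.1 else 0) = Nat.multinomial s k :=
      Nat.multinomial_congr hoff
    rw [Nat.multinomial_cons, prod_cons]
    simp only [addRightEmbedding_apply, hmult, Pi.add_apply, if_pos, hka, zero_add,
      sum_congr rfl hoff, prod_congr rfl fun i hi => congrArg (p · (x i)) (hoff i hi), hk.1, hq]
    push_cast
    ring

theorem Polynomial.eq_of_derivative_eq_of_eval_eq {R : Type*} [CommRing R] [IsAddTorsionFree R]
    {p q : R[X]} (hd : derivative p = derivative q) (a : R) (he : p.eval a = q.eval a) : p = q := by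
  have hpq : derivative (p - q) = 0 := by rw [derivative_sub, hd, sub_self]
  have hc := eq_C_of_derivative_eq_zero hpq
  have h0 : (p - q).coeff 0 = 0 := by
    simpa [he] using (congrArg (eval a) hc).symm
  rwa [h0, map_zero, sub_eq_zero] at hc

theorem sum_antidiagonal_neg_one_pow_mul_choose_mul_pow_eq_zero {R : Type*} [CommRing R]
    {N d : ℕ} (hd : d < N) (x z : R) :
    ∑ q ∈ antidiagonal N, (-1) ^ q.2 * N.choose q.1 * (x + q.1 * z) ^ d = 0 := by
  have hdeg : ((C z * X + C x) ^ d).natDegree < N :=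
    (natDegree_pow_le_of_le d natDegree_linear_le).trans_lt (by simpa using hd)
  have h := congrFun (fwdDiff_iter_eq_zero_of_degree_lt hdeg) 0
  rw [fwdDiff_iter_eq_sum_shift, Pi.zero_apply] at h
  rw [Nat.sum_antidiagonal_eq_sum_range_succ_mk, ← h]
  refine sum_congr rfl fun k _ => ?_
  simp only [zsmul_eq_mul, eval_pow, eval_add, eval_mul, eval_C, eval_X, zero_add, nsmul_one]
  push_cast
  ring

section AbelPoly

variable {R : Type*}

section CommSemiring

variable [CommSemiring R]

/-- `abelPoly z n x = x * (x + n * z) ^ (n - 1)` for `n ≠ 0`; at `n = 0` that formula would give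
`x`, but the sequence starts with `1`. -/
def abelPoly (z : R) : ℕ → R → R
  | 0, _ => 1
  | n + 1, x => x * (x + (n + 1) * z) ^ n

variable (z : R)

@[simp] theorem abelPoly_zero (x : R) : abelPoly z 0 x = 1 := rfl

theorem abelPoly_succ (n : ℕ) (x : R) : abelPoly z (n + 1) x = x * (x + (n + 1) * z) ^ n := rfl

theorem abelPoly_apply_zero (n : ℕ) : abelPoly z n 0 = if n = 0 then 1 else 0 := by
  cases n <;> simp [abelPoly_succ]

theorem abelPoly_one (n : ℕ) : abelPoly z n 1 = (n * z + 1) ^ (n - 1) := by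
  cases n with
  | zero => simp
  | succ n => rw [abelPoly_succ, Nat.add_sub_cancel]; push_cast; ring

theorem abelPoly_self (n : ℕ) : abelPoly z n z = (n + 1) ^ (n - 1) * z ^ n := by
  cases n with
  | zero => simp
  | succ n =>
    rw [abelPoly_succ, Nat.add_sub_cancel, show z + (n + 1) * z = (n + 1 + 1) * z by ring, mul_pow]
    push_cast
    ring

theorem abelPoly_mul_pow_of_add_eq (x : R) {i j n : ℕ} (h : i + j = n + 1) :
    abelPoly z i x * (x + i * z) ^ j = x * (x + i * z) ^ n := by
  cases i with
  | zero =>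
    obtain rfl : j = n + 1 := by omega
    simp [pow_succ']
  | succ i =>
    rw [abelPoly_succ, mul_assoc]
    push_cast
    rw [← pow_add, show i + j = n by omega]

end CommSemiring

section CommRing

variable [CommRing R] (z : R)

/-- The left side of Abel's identity, as a polynomial in `y`. -/
noncomputable def abelSum (x : R) (n : ℕ) : R[X] :=
  ∑ q ∈ antidiagonal n, C (n.choose q.1 * abelPoly z q.1 x) * (X + C (q.2 * z)) ^ q.2

theorem eval_abelSum_succ_neg (x : R) (n : ℕ) :
    (abelSum z x (n + 1)).eval (-(x + (n + 1) * z)) = 0 := by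
  have hterm : ∀ q ∈ antidiagonal (n + 1), ((n + 1).choose q.1 * abelPoly z q.1 x : R) *
      (-(x + (n + 1) * z) + q.2 * z) ^ q.2 =
        x * ((-1) ^ q.2 * (n + 1).choose q.1 * (x + q.1 * z) ^ n) := by
    intro q hq
    rw [HasAntidiagonal.mem_antidiagonal] at hq
    have hbase : -(x + (n + 1) * z) + q.2 * z = -(x + q.1 * z) := by
      rw [← Nat.cast_add_one, ← hq]; push_cast; ring
    calc _ = (-1) ^ q.2 * (n + 1).choose q.1 * (abelPoly z q.1 x * (x + q.1 * z) ^ q.2) := by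
          rw [hbase, neg_pow]; ring
      _ = _ := by rw [abelPoly_mul_pow_of_add_eq z x hq]; ring
  simp only [abelSum, eval_finsetSum, eval_mul, eval_C, eval_pow, eval_add, eval_X]
  rw [sum_congr rfl hterm, ← mul_sum,
    sum_antidiagonal_neg_one_pow_mul_choose_mul_pow_eq_zero n.lt_succ_self, mul_zero]

theorem derivative_abelSum_succ (x : R) (n : ℕ) :
    derivative (abelSum z x (n + 1)) = C ((n : R) + 1) * (abelSum z x n).comp (X + C z) := by
  rw [abelSum, abelSum, derivative_sum, Nat.sum_antidiagonal_succ', Polynomial.sum_comp, mul_sum]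
  simp only [pow_zero, mul_one, derivative_C, zero_add]
  refine sum_congr rfl fun q hq => ?_
  rw [HasAntidiagonal.mem_antidiagonal] at hq
  have hchoose : ((n + 1).choose q.1 : R) * (q.2 + 1 : ℕ) = (n + 1) * n.choose q.1 := by
    rw [← Nat.cast_add_one, ← Nat.cast_mul, ← Nat.cast_mul, mul_comm _ (n.choose q.1),
      Nat.choose_mul_succ_eq, show n + 1 - q.1 = q.2 + 1 by omega]
  simp only [derivative_C_mul, derivative_X_add_C_pow, mul_comp, C_comp, pow_comp, add_comp, X_comp,
    Nat.add_sub_cancel]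
  have hshift : X + C z + C (q.2 * z) = X + C (((q.2 + 1 : ℕ) : R) * z) := by
    rw [add_assoc, ← C_add]; push_cast; ring_nf
  rw [hshift, ← mul_assoc, ← mul_assoc, ← C_mul, ← C_mul]
  congr 2
  linear_combination abelPoly z q.1 x * hchoose

theorem abelPoly_eq_eval (k : ℕ) (y : R) :
    abelPoly z k y = ((X + C (k * z)) ^ k - C z * derivative ((X + C (k * z)) ^ k)).eval y := by
  cases k with
  | zero => simp
  | succ k =>
    simp only [abelPoly_succ, derivative_X_add_C_pow, eval_sub, eval_mul, eval_pow, eval_add,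
      eval_X, eval_C, Nat.add_sub_cancel]
    push_cast
    ring

variable [IsAddTorsionFree R]

theorem abelSum_eq (x : R) (n : ℕ) : abelSum z x n = (X + C (x + n * z)) ^ n := by
  induction n with
  | zero => simp [abelSum]
  | succ n ih =>
    refine eq_of_derivative_eq_of_eval_eq ?_ (-(x + (n + 1) * z)) ?_
    · rw [derivative_abelSum_succ, ih, derivative_X_add_C_pow, pow_comp, add_comp, X_comp, C_comp,
        add_assoc, ← C_add]
      push_cast
      ring_nf
    · rw [eval_abelSum_succ_neg]
      simp

theorem abelPoly_add (n : ℕ) (x y : R) :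
    abelPoly z n (x + y) =
      ∑ q ∈ antidiagonal n, n.choose q.1 * abelPoly z q.1 x * abelPoly z q.2 y := by
  have hsum : ∑ q ∈ antidiagonal n, n.choose q.1 * abelPoly z q.1 x * abelPoly z q.2 y =
      (abelSum z x n - C z * derivative (abelSum z x n)).eval y := by
    simp only [abelSum, derivative_sum, derivative_C_mul, mul_sum, ← sum_sub_distrib,
      eval_finsetSum, abelPoly_eq_eval z _ y, mul_left_comm (C z), ← mul_sub, eval_mul, eval_C]
  rw [hsum, abelSum_eq]
  cases n with
  | zero => simp
  | succ n =>
    simp only [abelPoly_succ, derivative_X_add_C_pow, eval_sub, eval_mul, eval_pow, eval_add,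
      eval_X, eval_C, Nat.add_sub_cancel]
    push_cast
    ring

end CommRing

end AbelPoly

theorem multinomial_forest_identity_general (m n : ℕ) :
    ∑ k ∈ Finset.Nat.antidiagonalTuple m n,
      Nat.multinomial Finset.univ k * ∏ i, (k i * m + 1) ^ (k i - 1)
      = (n + 1) ^ (n - 1) * m ^ n := by
  have key := binomialType_apply_sum_eq_sum_piAntidiag (abelPoly (m : ℤ))
    (abelPoly_apply_zero _) (abelPoly_add _) (univ : Finset (Fin m)) (fun _ => 1) n
  simp only [sum_const, card_univ, Fintype.card_fin, nsmul_one, abelPoly_one, abelPoly_self,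
    piAntidiag_univ_fin_eq_antidiagonalTuple] at key
  exact_mod_cast key.symm

theorem multinomial_forest_identity (m n : ℕ) (hm : 0 < m) (hn : 0 < n) :
    ∑ k ∈ Finset.Nat.antidiagonalTuple m n,
      Nat.multinomial Finset.univ k * ∏ i, (k i * m + 1) ^ (k i - 1)
      = (n + 1) ^ (n - 1) * m ^ n :=
  multinomial_forest_identity_general m n
end

section
/- For every positive integer m and every real number c with 0 < c ≤ 1, f(m,c) = 1. -/
/-!
Writing `z = c e^{-c}`, the series is `e^{-c/m} ∑ₖ bₖ zᵏ` with `bₖ = (km+1)^{k-1} / (mᵏ k!)`, and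
Abel's identity says `∑ₖ bₖ (c e^{-c})ᵏ = e^{c/m}` for `0 ≤ c ≤ 1`. For small `c`, expanding every
`e^{-c(km+1)/m}` into its Taylor series gives an absolutely convergent double series whose
antidiagonal sums are `n`-th finite differences of the polynomial `k ↦ (km+1)^{n-1}` of degree
`n - 1`, hence vanish for `n ≥ 1`. The identity extends to `0 < c < 1` by analytic continuation
in `c`, since then `c e^{-c} < e^{-1}`, which is within the radius of convergence; it reaches
`c = 1` by monotone convergence, as all `bₖ` are nonnegative.
-/

/-- `f m c = ∑_{k=0}^∞ (km+1)^{k-1} c^k e^{-c(km+1)/m} / (m^k k!)`, where the factor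
`(km+1)^{k-1}` for `k = 0` is interpreted as `1` (here via `ℕ`-subtraction in the exponent,
which gives `(0·m+1)^0 = 1`). -/
noncomputable def f (m c : ℝ) : ℝ :=
  ∑' k : ℕ, ((k : ℝ) * m + 1) ^ (k - 1) * c ^ k *
    Real.exp (-c * ((k : ℝ) * m + 1) / m) / (m ^ k * (Nat.factorial k : ℝ))

open Real Finset Filter Topology Polynomial Nat

theorem sum_range_alternating_choose_mul_pow_eq_zero {R : Type*} [CommRing R] (a b : R)
    {j n : ℕ} (hj : j < n) :
    ∑ k ∈ range (n + 1), (-1) ^ (n - k) * (n.choose k : R) * (k * a + b) ^ j = 0 := by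
  have hdeg : ((C a * X + C b) ^ j).natDegree < n :=
    (natDegree_pow_le_of_le j natDegree_linear_le).trans_lt (by simpa using hj)
  have h := congrFun (fwdDiff_iter_eq_zero_of_degree_lt hdeg) 0
  simp only [fwdDiff_iter_eq_sum_shift, eval_pow, eval_add, eval_mul, eval_C, eval_X, zero_add,
    nsmul_one, zsmul_eq_mul, Int.cast_mul, Int.cast_pow, Int.cast_neg, Int.cast_one,
    Int.cast_natCast, Pi.zero_apply] at h
  rw [← h]
  exact sum_congr rfl fun k _ ↦ by ring

theorem tsum_eq_tsum_sum_antidiagonal {A α : Type*} [AddCommMonoid A] [HasAntidiagonal A]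
    [AddCommGroup α] [UniformSpace α] [IsUniformAddGroup α] [CompleteSpace α] [T0Space α]
    {F : A × A → α} (hF : Summable F) :
    ∑' p, F p = ∑' n, ∑ p ∈ antidiagonal n, F p := by
  rw [← HasAntidiagonal.sigmaAntidiagonalEquivProd.tsum_eq F]
  exact (HasAntidiagonal.sigmaAntidiagonalEquivProd.summable_iff.mpr hF).tsum_sigma.trans
    (tsum_congr fun n ↦ Finset.tsum_subtype _ F)

theorem hasSum_mul_pow_of_tendsto {α : Type*} {l : Filter α} [l.NeBot] {b : ℕ → ℝ}
    (hb : ∀ k, 0 ≤ b k) {x : α → ℝ} {r L : ℝ} (hx : Tendsto x l (𝓝 r))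
    (hxr : ∀ᶠ t in l, 0 ≤ x t ∧ x t ≤ r) (hs : ∀ᶠ t in l, Summable fun k ↦ b k * x t ^ k)
    (hL : Tendsto (fun t ↦ ∑' k, b k * x t ^ k) l (𝓝 L)) :
    HasSum (fun k ↦ b k * r ^ k) L := by
  have hr : 0 ≤ r := ge_of_tendsto hx (hxr.mono fun _ h ↦ h.1)
  have hterm : ∀ k, 0 ≤ b k * r ^ k := fun k ↦ mul_nonneg (hb k) (pow_nonneg hr k)
  have hpartial : ∀ n, ∑ k ∈ range n, b k * r ^ k ≤ L := fun n ↦ by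
    refine le_of_tendsto_of_tendsto (tendsto_finsetSum _ fun k _ ↦ (hx.pow k).const_mul (b k))
      hL ?_
    filter_upwards [hxr, hs] with t ht hst
    exact hst.sum_le_tsum _ fun k _ ↦ mul_nonneg (hb k) (pow_nonneg ht.1 k)
  have hsum : Summable fun k ↦ b k * r ^ k := summable_of_sum_range_le hterm hpartial
  refine hsum.hasSum_iff.mpr (le_antisymm (hsum.tsum_le_of_sum_range_le hpartial) ?_)
  refine le_of_tendsto hL ?_
  filter_upwards [hxr, hs] with t ht hst
  exact hst.tsum_le_tsum (fun k ↦ by gcongr; exacts [hb k, ht.1, ht.2]) hsum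

theorem Real.hasSum_pow_div_factorial (x : ℝ) : HasSum (fun n ↦ x ^ n / n !) (exp x) :=
  Real.exp_eq_exp_ℝ ▸ NormedSpace.expSeries_div_hasSum_exp x

theorem abs_mul_exp_neg_lt_exp_neg_one {c : ℝ} (hc0 : 0 ≤ c) (hc1 : c ≠ 1) :
    |c * exp (-c)| < exp (-1) := by
  have h := add_one_lt_exp (sub_ne_zero.mpr hc1)
  rw [abs_of_nonneg (by positivity)]
  calc c * exp (-c) < exp (c - 1) * exp (-c) := by gcongr; linarith
    _ = exp (-1) := by rw [← exp_add]; ring_nf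

theorem mul_exp_lt_exp_neg_one {c : ℝ} (hc : c ≤ 1 / 8) : c * exp c < exp (-1) := by
  have he : exp (1 / 8) * exp 1 < 8 := calc
    exp (1 / 8) * exp 1 ≤ exp 1 * exp 1 := by gcongr; norm_num
    _ < 8 := by nlinarith [exp_one_lt_d9, exp_pos 1]
  calc c * exp c ≤ 1 / 8 * exp (1 / 8) :=
        mul_le_mul hc (exp_le_exp.mpr hc) (exp_pos c).le (by norm_num)
    _ < exp (-1) := by
        rw [exp_neg, inv_eq_one_div, lt_div_iff₀ (exp_pos 1)]
        linarith

noncomputable def abelCoeff (M : ℝ) (k : ℕ) : ℝ := ((k : ℝ) * M + 1) ^ (k - 1) / (M ^ k * k !)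

noncomputable def abelSeries (M z : ℝ) : ℝ := ∑' k, abelCoeff M k * z ^ k

theorem f_eq_abelSeries {M : ℝ} (hM : M ≠ 0) (c : ℝ) :
    f M c = abelSeries M (c * exp (-c)) * exp (-(c / M)) := by
  rw [f, abelSeries, ← tsum_mul_right]
  refine tsum_congr fun k ↦ ?_
  have hexp : exp (-c * (k * M + 1) / M) = exp (-c) ^ k * exp (-(c / M)) := by
    rw [← exp_nat_mul, ← exp_add]
    congr 1
    field_simp
    ring
  rw [hexp, abelCoeff, mul_pow]
  ring

section abelCoeff

variable {M : ℝ} (hM : 0 < M)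
include hM

theorem abelCoeff_nonneg (k : ℕ) : 0 ≤ abelCoeff M k := by
  unfold abelCoeff; positivity

theorem abelCoeff_le_exp (k : ℕ) : abelCoeff M k ≤ exp (k + M⁻¹) := by
  have h1 : (1 : ℝ) ≤ k * M + 1 := by nlinarith [k.cast_nonneg (α := ℝ)]
  calc abelCoeff M k ≤ ((k : ℝ) * M + 1) ^ k / (M ^ k * k !) := by
        unfold abelCoeff; gcongr
        exact k.sub_le 1
    _ = (k + M⁻¹) ^ k / k ! := by
        rw [← div_div, ← div_pow]; congr 2; field_simp
    _ ≤ exp (k + M⁻¹) := pow_div_factorial_le_exp _ (by positivity) k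

theorem abelCoeff_mul_exp_neg_one_pow_le (k : ℕ) :
    abelCoeff M k * exp (-1) ^ k ≤ exp M⁻¹ := by
  calc abelCoeff M k * exp (-1) ^ k ≤ exp (k + M⁻¹) * exp (-1) ^ k := by
        gcongr; exact abelCoeff_le_exp hM k
    _ = exp M⁻¹ := by rw [← exp_nat_mul, ← exp_add]; ring_nf

theorem summable_abelCoeff_mul_pow {z : ℝ} (hz : |z| < exp (-1)) :
    Summable fun k ↦ abelCoeff M k * z ^ k := by
  have hq : |z| / exp (-1) < 1 := (div_lt_one (exp_pos _)).mpr hz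
  refine Summable.of_norm_bounded
    ((summable_geometric_of_lt_one (by positivity) hq).mul_left (exp M⁻¹)) fun k ↦ ?_
  calc ‖abelCoeff M k * z ^ k‖ = abelCoeff M k * exp (-1) ^ k * (|z| / exp (-1)) ^ k := by
        rw [norm_mul, norm_pow, Real.norm_of_nonneg (abelCoeff_nonneg hM k), Real.norm_eq_abs,
          div_pow, mul_assoc, mul_div_cancel₀ _ (by positivity)]
    _ ≤ exp M⁻¹ * (|z| / exp (-1)) ^ k := by
        gcongr; exact abelCoeff_mul_exp_neg_one_pow_le hM k

theorem analyticAt_abelSeries {z : ℝ} (hz : |z| < exp (-1)) :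
    AnalyticAt ℝ (abelSeries M) z := by
  set p := FormalMultilinearSeries.ofScalars ℝ (abelCoeff M)
  have hrad : ENNReal.ofReal (exp (-1)) ≤ p.radius := by
    refine p.le_radius_of_bound (exp M⁻¹) fun n ↦ ?_
    rw [FormalMultilinearSeries.ofScalars_norm, Real.norm_of_nonneg (abelCoeff_nonneg hM n),
      Real.coe_toNNReal _ (exp_pos _).le]
    exact abelCoeff_mul_exp_neg_one_pow_le hM n
  have hp : abelSeries M = p.sum := funext fun w ↦ by
    simp [abelSeries, p, ← FormalMultilinearSeries.ofScalarsSum.eq_1,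
      FormalMultilinearSeries.ofScalars_sum_eq]
  rw [hp]
  refine p.analyticOnNhd z (lt_of_lt_of_le ?_ hrad)
  rw [edist_zero_right, ← ofReal_norm]
  exact (ENNReal.ofReal_lt_ofReal_iff (exp_pos _)).mpr hz

end abelCoeff

noncomputable def abelDoubleTerm (M c : ℝ) (p : ℕ × ℕ) : ℝ :=
  abelCoeff M p.1 * c ^ p.1 * ((-(c * (p.1 * M + 1) / M)) ^ p.2 / p.2 !)

theorem hasSum_abelDoubleTerm_snd (M c : ℝ) (k : ℕ) :
    HasSum (fun j ↦ abelDoubleTerm M c (k, j))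
      (abelCoeff M k * c ^ k * exp (-(c * (k * M + 1) / M))) :=
  (hasSum_pow_div_factorial _).mul_left _

theorem summable_abelDoubleTerm {M c : ℝ} (hM : 0 < M) (hc0 : 0 ≤ c)
    (hc : c * exp c < exp (-1)) : Summable (abelDoubleTerm M c) := by
  have hnorm : ∀ p : ℕ × ℕ, ‖abelDoubleTerm M c p‖ =
      abelCoeff M p.1 * c ^ p.1 * ((c * (p.1 * M + 1) / M) ^ p.2 / p.2 !) := fun p ↦ by
    have hA : 0 ≤ abelCoeff M p.1 * c ^ p.1 := mul_nonneg (abelCoeff_nonneg hM _) (by positivity)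
    have hB : 0 ≤ c * (p.1 * M + 1) / M := by positivity
    rw [abelDoubleTerm, norm_mul, norm_div, norm_pow, norm_neg, Real.norm_natCast,
      Real.norm_of_nonneg hA, Real.norm_of_nonneg hB]
  have hinner : ∀ k : ℕ, HasSum (fun j ↦ ‖abelDoubleTerm M c (k, j)‖)
      (exp (c / M) * (abelCoeff M k * (c * exp c) ^ k)) := fun k ↦ by
    rw [show exp (c / M) * (abelCoeff M k * (c * exp c) ^ k) =
        abelCoeff M k * c ^ k * exp (c * (k * M + 1) / M) by
      rw [mul_pow, ← exp_nat_mul, show c * (k * M + 1) / M = k * c + c / M by field_simp, exp_add]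
      ring]
    simpa only [hnorm] using (hasSum_pow_div_factorial _).mul_left _
  refine Summable.of_norm ((summable_prod_of_nonneg fun _ ↦ norm_nonneg _).mpr
    ⟨fun k ↦ (hinner k).summable, ?_⟩)
  simp only [(hinner _).tsum_eq]
  exact (summable_abelCoeff_mul_pow hM (by rwa [abs_of_nonneg (by positivity)])).mul_left _

theorem abelDoubleTerm_eq {M : ℝ} (hM : M ≠ 0) (c : ℝ) {k j : ℕ} (hkj : 0 < k + j) :
    abelDoubleTerm M c (k, j) = c ^ (k + j) / (M ^ (k + j) * (k + j)!) *
      ((-1) ^ j * ((k + j).choose k : ℝ) * (k * M + 1) ^ (k + j - 1)) := by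
  have hpow : ((k : ℝ) * M + 1) ^ (k - 1) * (k * M + 1) ^ j = (k * M + 1) ^ (k + j - 1) := by
    rcases k.eq_zero_or_pos with rfl | hk
    · simp
    · rw [← pow_add]; congr 1; omega
  have hfac : ((k + j).choose k : ℝ) * k ! * j ! = (k + j)! := by
    rw [Nat.choose_symm_add]; exact_mod_cast Nat.add_choose_mul_factorial_mul_factorial k j
  have hchoose : ((k + j).choose k : ℝ) ≠ 0 := by
    exact_mod_cast (Nat.choose_pos (Nat.le_add_right k j)).ne'
  simp only [abelDoubleTerm, abelCoeff]
  rw [← hpow, ← hfac, neg_pow, div_pow, mul_pow]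
  field_simp
  ring

theorem sum_antidiagonal_abelDoubleTerm {M : ℝ} (hM : M ≠ 0) (c : ℝ) (n : ℕ) :
    ∑ p ∈ antidiagonal n, abelDoubleTerm M c p = if n = 0 then 1 else 0 := by
  split_ifs with hn
  · simp [hn, abelDoubleTerm, abelCoeff]
  rw [Nat.sum_antidiagonal_eq_sum_range_succ_mk]
  calc ∑ k ∈ range (n + 1), abelDoubleTerm M c (k, n - k)
      = ∑ k ∈ range (n + 1), c ^ n / (M ^ n * n !) *
          ((-1) ^ (n - k) * (n.choose k : ℝ) * (k * M + 1) ^ (n - 1)) :=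
        sum_congr rfl fun k hk ↦ by
          have hkn : k + (n - k) = n := Nat.add_sub_cancel' (Nat.lt_succ_iff.mp (mem_range.mp hk))
          simpa only [hkn] using abelDoubleTerm_eq hM c (k := k) (j := n - k) (by omega)
    _ = 0 := by
        rw [← mul_sum, sum_range_alternating_choose_mul_pow_eq_zero _ _ (by omega), mul_zero]

theorem f_eq_one_of_mul_exp_lt {M c : ℝ} (hM : 0 < M) (hc0 : 0 ≤ c)
    (hc : c * exp c < exp (-1)) : f M c = 1 := by
  have hF := summable_abelDoubleTerm hM hc0 hc
  calc f M c = ∑' k, ∑' j, abelDoubleTerm M c (k, j) := tsum_congr fun k ↦ by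
        rw [(hasSum_abelDoubleTerm_snd M c k).tsum_eq, abelCoeff, neg_mul, neg_div]
        ring
    _ = ∑' p, abelDoubleTerm M c p := hF.tsum_prod.symm
    _ = ∑' n, ∑ p ∈ antidiagonal n, abelDoubleTerm M c p := tsum_eq_tsum_sum_antidiagonal hF
    _ = 1 := by simp_rw [sum_antidiagonal_abelDoubleTerm hM.ne']; exact tsum_ite_eq 0 1

theorem abelSeries_mul_exp_neg_eq_exp_of_mul_exp_lt {M c : ℝ} (hM : 0 < M) (hc0 : 0 ≤ c)
    (hc : c * exp c < exp (-1)) : abelSeries M (c * exp (-c)) = exp (c / M) := by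
  have h := f_eq_one_of_mul_exp_lt hM hc0 hc
  rwa [f_eq_abelSeries hM.ne', exp_neg (c / M), mul_inv_eq_one₀ (exp_ne_zero _)] at h

theorem abelSeries_mul_exp_neg_eq_exp_of_lt_one {M c : ℝ} (hM : 0 < M) (hc0 : 0 < c)
    (hc1 : c < 1) : abelSeries M (c * exp (-c)) = exp (c / M) := by
  have hseries : AnalyticOnNhd ℝ (fun t ↦ abelSeries M (t * exp (-t))) (Set.Ioo 0 1) := fun t ht ↦
    AnalyticAt.comp (f := fun s ↦ s * exp (-s))
      (analyticAt_abelSeries hM (abs_mul_exp_neg_lt_exp_neg_one ht.1.le ht.2.ne)) (by fun_prop)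
  have hexp : AnalyticOnNhd ℝ (fun t ↦ exp (t / M)) (Set.Ioo 0 1) := fun _ _ ↦ by fun_prop
  refine hseries.eqOn_of_preconnected_of_eventuallyEq hexp isPreconnected_Ioo
    (z₀ := 1 / 16) ⟨by norm_num, by norm_num⟩ ?_ ⟨hc0, hc1⟩
  filter_upwards [Icc_mem_nhds (by norm_num : (0 : ℝ) < 1 / 16)
    (by norm_num : (1 / 16 : ℝ) < 1 / 8)] with t ht
  exact abelSeries_mul_exp_neg_eq_exp_of_mul_exp_lt hM ht.1 (mul_exp_lt_exp_neg_one ht.2)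

theorem abelSeries_exp_neg_one {M : ℝ} (hM : 0 < M) : abelSeries M (exp (-1)) = exp (1 / M) := by
  have hIoo : ∀ᶠ c in 𝓝[<] (1 : ℝ), c ∈ Set.Ioo 0 1 := Ioo_mem_nhdsLT one_pos
  have hx : Tendsto (fun c : ℝ ↦ c * exp (-c)) (𝓝[<] 1) (𝓝 (exp (-1))) := by
    have : Continuous fun c : ℝ ↦ c * exp (-c) := by fun_prop
    simpa using (this.tendsto 1).mono_left nhdsWithin_le_nhds
  have hlim : Tendsto (fun c : ℝ ↦ exp (c / M)) (𝓝[<] 1) (𝓝 (exp (1 / M))) := by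
    have : Continuous fun c : ℝ ↦ exp (c / M) := by fun_prop
    exact (this.tendsto 1).mono_left nhdsWithin_le_nhds
  refine (hasSum_mul_pow_of_tendsto (abelCoeff_nonneg hM) hx ?_ ?_ ?_).tsum_eq
  · filter_upwards [hIoo] with c hc
    exact ⟨mul_nonneg hc.1.le (exp_pos _).le,
      (le_abs_self _).trans (abs_mul_exp_neg_lt_exp_neg_one hc.1.le hc.2.ne).le⟩
  · filter_upwards [hIoo] with c hc
    exact summable_abelCoeff_mul_pow hM (abs_mul_exp_neg_lt_exp_neg_one hc.1.le hc.2.ne)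
  · refine hlim.congr' ?_
    filter_upwards [hIoo] with c hc
    exact (abelSeries_mul_exp_neg_eq_exp_of_lt_one hM hc.1 hc.2).symm

theorem abelSeries_mul_exp_neg_eq_exp {M c : ℝ} (hM : 0 < M) (hc0 : 0 < c) (hc1 : c ≤ 1) :
    abelSeries M (c * exp (-c)) = exp (c / M) := by
  rcases hc1.lt_or_eq with hc1 | rfl
  · exact abelSeries_mul_exp_neg_eq_exp_of_lt_one hM hc0 hc1
  · simpa using abelSeries_exp_neg_one hM

theorem f_eq_one {M c : ℝ} (hM : 0 < M) (hc0 : 0 < c) (hc1 : c ≤ 1) : f M c = 1 := by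
  rw [f_eq_abelSeries hM.ne', abelSeries_mul_exp_neg_eq_exp hM hc0 hc1, ← exp_add, add_neg_cancel,
    exp_zero]

theorem f_eq_one_subcritical (m : ℕ) (hm : 0 < m) (c : ℝ) (hc0 : 0 < c) (hc1 : c ≤ 1) :
    f (m : ℝ) c = 1 :=
  f_eq_one (Nat.cast_pos.mpr hm) hc0 hc1
end
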